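/- arXiv:1311.4245 — 2 statements merged into one kernel-verified Lean document; each statement's English description precedes it below -/
import Mathlib

section
/- Let φ = [[α, β],[−β̄, ᾱ]] with α, β ∈ ℂ and |α|² + |β|² = 1 (so φ ∈ SU(2)). Define the 3×3 real matrix Φ = [[|α|²−|β|², 2Re(αβ̄), −2Im(αβ̄)], [−2Re(αβ), Re(α²−β²), −Im(α²+β²)], [−2Im(αβ), Im(α²−β²), Re(α²+β²)]]. Then Φ ∈ SO(3) (i.e. ΦᵀΦ = I and det Φ = 1) and φ·f(x)·φ⁻¹ = f(Φx) for all x ∈ ℝ³. -/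
/-!
Writing α = a + bi and β = c + di, the given Φ is the Euler–Rodrigues matrix of the quaternion
(a, b, c, d), written in the basis e₁, e₂, e₃ of 𝔰𝔲(2). Without any normalisation one has
φ f(x) adj(φ) = f(Φx), ΦᵀΦ = (a² + b² + c² + d²)² and det Φ = (a² + b² + c² + d²)³; these are
polynomial identities. The hypothesis |α|² + |β|² = 1 says that det φ = 1, so adj φ = φ⁻¹ and the
scale factors become 1.
-/

open Matrix

noncomputable section

/-- e₁ = (i/2)[[1,0],[0,−1]]. -/
def e1 : Matrix (Fin 2) (Fin 2) ℂ := (Complex.I / 2) • !![1, 0; 0, -1]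

/-- e₂ = (i/2)[[0,1],[1,0]]. -/
def e2 : Matrix (Fin 2) (Fin 2) ℂ := (Complex.I / 2) • !![0, 1; 1, 0]

/-- e₃ = (1/2)[[0,−1],[1,0]]. -/
def e3 : Matrix (Fin 2) (Fin 2) ℂ := (1 / 2 : ℂ) • !![0, -1; 1, 0]

/-- The linear map f : ℝ³ → M₂(ℂ), f(x) = x₁e₁ + x₂e₂ + x₃e₃. -/
def fmap (x : Fin 3 → ℝ) : Matrix (Fin 2) (Fin 2) ℂ :=
  (x 0 : ℂ) • e1 + (x 1 : ℂ) • e2 + (x 2 : ℂ) • e3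

section Rodrigues

variable {R : Type*} [CommRing R] (a b c d : R)

def rodriguesMatrix : Matrix (Fin 3) (Fin 3) R :=
  !![a ^ 2 + b ^ 2 - c ^ 2 - d ^ 2, 2 * (a * c + b * d), 2 * (a * d - b * c);
     2 * (b * d - a * c), a ^ 2 - b ^ 2 - c ^ 2 + d ^ 2, -2 * (a * b + c * d);
     -2 * (a * d + b * c), 2 * (a * b - c * d), a ^ 2 - b ^ 2 + c ^ 2 - d ^ 2]

theorem rodriguesMatrix_transpose_mul_self :
    (rodriguesMatrix a b c d)ᵀ * rodriguesMatrix a b c d =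
      (a ^ 2 + b ^ 2 + c ^ 2 + d ^ 2) ^ 2 • 1 := by
  ext i j
  fin_cases i <;> fin_cases j <;>
    simp [rodriguesMatrix, mul_apply, Fin.sum_univ_three, one_apply] <;> ring

theorem det_rodriguesMatrix :
    (rodriguesMatrix a b c d).det = (a ^ 2 + b ^ 2 + c ^ 2 + d ^ 2) ^ 3 := by
  rw [rodriguesMatrix, det_fin_three]
  simp
  ring

end Rodrigues

def su2Matrix (α β : ℂ) : Matrix (Fin 2) (Fin 2) ℂ :=
  !![α, β; -(starRingEnd ℂ) β, (starRingEnd ℂ) α]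

theorem det_su2Matrix (α β : ℂ) : (su2Matrix α β).det = ((‖α‖ ^ 2 + ‖β‖ ^ 2 : ℝ) : ℂ) := by
  rw [su2Matrix, det_fin_two_of, mul_neg, sub_neg_eq_add, Complex.mul_conj', Complex.mul_conj']
  push_cast
  ring

theorem su2Matrix_mul_fmap_mul_adjugate (α β : ℂ) (x : Fin 3 → ℝ) :
    su2Matrix α β * fmap x * (su2Matrix α β).adjugate =
      fmap (rodriguesMatrix α.re α.im β.re β.im *ᵥ x) := by
  rw [su2Matrix, adjugate_fin_two_of]
  ext i j
  fin_cases i <;> fin_cases j <;>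
    simp [fmap, e1, e2, e3, rodriguesMatrix, mul_apply, mulVec, dotProduct, Fin.sum_univ_three,
      pow_two, Complex.ext_iff] <;> constructor <;> ring

/-- For φ = [[α,β],[−β̄,ᾱ]] ∈ SU(2), the explicitly given 3×3 real matrix Φ
belongs to SO(3) and satisfies φ f(x) φ⁻¹ = f(Φx) for all x ∈ ℝ³. -/
theorem statement1 (α β : ℂ) (h : ‖α‖ ^ 2 + ‖β‖ ^ 2 = 1) :
    let φ : Matrix (Fin 2) (Fin 2) ℂ := !![α, β; -(starRingEnd ℂ) β, (starRingEnd ℂ) α]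
    let Φ : Matrix (Fin 3) (Fin 3) ℝ :=
      !![‖α‖ ^ 2 - ‖β‖ ^ 2,
           2 * (α * (starRingEnd ℂ) β).re, -2 * (α * (starRingEnd ℂ) β).im;
         -2 * (α * β).re, (α ^ 2 - β ^ 2).re, -((α ^ 2 + β ^ 2).im);
         -2 * (α * β).im, (α ^ 2 - β ^ 2).im, (α ^ 2 + β ^ 2).re]
    Φᵀ * Φ = 1 ∧ Φ.det = 1 ∧
      ∀ x : Fin 3 → ℝ, φ * fmap x * φ⁻¹ = fmap (Φ.mulVec x) := by
  intro φ Φ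
  have hφ : φ = su2Matrix α β := rfl
  have hΦ : Φ = rodriguesMatrix α.re α.im β.re β.im := by
    ext i j
    fin_cases i <;> fin_cases j <;>
      simp [Φ, rodriguesMatrix, Complex.norm_mul_self_eq_normSq, Complex.normSq_apply, pow_two] <;>
      ring
  have hquat : α.re ^ 2 + α.im ^ 2 + β.re ^ 2 + β.im ^ 2 = 1 := by
    rw [← h, Complex.sq_norm, Complex.sq_norm, Complex.normSq_apply, Complex.normSq_apply]
    ring
  have hinv : φ⁻¹ = φ.adjugate := by
    rw [inv_def, hφ, det_su2Matrix, h, Complex.ofReal_one, Ring.inverse_one, one_smul]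
  refine ⟨?_, ?_, fun x => ?_⟩
  · rw [hΦ, rodriguesMatrix_transpose_mul_self, hquat, one_pow, one_smul]
  · rw [hΦ, det_rodriguesMatrix, hquat, one_pow]
  · rw [hinv, hΦ, hφ]
    exact su2Matrix_mul_fmap_mul_adjugate α β x
end
end

section
/- Let Φ = [Φᵢⱼ] ∈ SO(3) with tr Φ ≠ −1. Define α = (1 + tr Φ + i(Φ₃₂ − Φ₂₃)) / (2√(1 + tr Φ)) and β = (Φ₁₂ − Φ₂₁ + i(Φ₁₃ − Φ₃₁)) / (2√(1 + tr Φ)), and φ = [[α, β],[−β̄, ᾱ]]. Then |α|² + |β|² = 1 (so φ ∈ SU(2)) and φ·f(x)·φ⁻¹ = f(Φx) for all x ∈ ℝ³. -/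
open Matrix

noncomputable section

/-!
Put `c = 1 + tr Φ` and `K = Φ - Φᵀ`. Since `adj Φ = Φᵀ`, Cayley–Hamilton for `3 × 3` matrices
reads `Φ² = Φᵀ + tr Φ • (Φ - 1)`, and therefore `K² = c • (Φ + Φᵀ - 2)`. Comparing this with the
formula `R(w, u) = (w² - |u|²) + 2 u uᵀ + 2 w [u]ₓ` for the rotation induced by a quaternion
`w + u` shows that the quaternion `q = (c, axial vector of K)` satisfies `|q|² = 4c` and
`R(q) = 4c • Φ`. Hence `q / (2√c)` is a unit quaternion inducing `Φ`, and `φ` is its image in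
`SU(2)`, whose conjugation action on `f(ℝ³)` is the rotation it induces.
-/

open Quaternion
open Complex (I)

def quatMatrix (q : ℍ[ℝ]) : Matrix (Fin 2) (Fin 2) ℂ :=
  !![q.re + q.imI * I, q.imJ + q.imK * I; -(q.imJ - q.imK * I), q.re - q.imI * I]

/-- `quatMatrix` sends `i / 2`, `k / 2`, `-j / 2` to `e1`, `e2`, `e3`; in these coordinates this is
the matrix of the rotation `v ↦ q v q⋆` for a unit quaternion `q`. -/
def quatRotation (q : ℍ[ℝ]) : Matrix (Fin 3) (Fin 3) ℝ :=
  let w := q.re; let x := q.imI; let y := q.imJ; let z := q.imK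
  !![w ^ 2 + x ^ 2 - y ^ 2 - z ^ 2, 2 * (w * y + x * z), 2 * (w * z - x * y);
     2 * (x * z - w * y), w ^ 2 - x ^ 2 - y ^ 2 + z ^ 2, -2 * (w * x + y * z);
     -2 * (w * z + x * y), 2 * (w * x - y * z), w ^ 2 - x ^ 2 + y ^ 2 - z ^ 2]

theorem quatMatrix_mul_quatMatrix_star (q : ℍ[ℝ]) :
    quatMatrix q * quatMatrix (star q) = ((normSq q : ℝ) : ℂ) • 1 := by
  ext i j
  fin_cases i <;> fin_cases j <;>
    simp [quatMatrix, mul_apply, normSq_def'] <;> ring_nf <;> simp [Complex.I_sq] <;> ring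

theorem inv_quatMatrix {q : ℍ[ℝ]} (hq : normSq q = 1) :
    (quatMatrix q)⁻¹ = quatMatrix (star q) :=
  inv_eq_right_inv (by rw [quatMatrix_mul_quatMatrix_star, hq, Complex.ofReal_one, one_smul])

theorem normSq_quatMatrix (q : ℍ[ℝ]) :
    ‖quatMatrix q 0 0‖ ^ 2 + ‖quatMatrix q 0 1‖ ^ 2 = normSq q := by
  simp [quatMatrix, Complex.sq_norm, Complex.normSq_add_mul_I, normSq_def']
  ring

theorem quatMatrix_mul_fmap_mul_quatMatrix_star (q : ℍ[ℝ]) (v : Fin 3 → ℝ) :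
    quatMatrix q * fmap v * quatMatrix (star q) = fmap (quatRotation q *ᵥ v) := by
  ext i j
  fin_cases i <;> fin_cases j <;>
    simp [quatMatrix, quatRotation, fmap, e1, e2, e3, mul_apply, mulVec, dotProduct,
      Fin.sum_univ_three] <;> ring_nf <;> simp [Complex.I_sq] <;> ring

theorem quatRotation_smul (r : ℝ) (q : ℍ[ℝ]) :
    quatRotation (r • q) = r ^ 2 • quatRotation q := by
  ext i j
  fin_cases i <;> fin_cases j <;> simp [quatRotation] <;> ring

theorem adjugate_eq_transpose_of_orthogonal {n R : Type*} [Fintype n] [DecidableEq n]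
    [CommRing R] {A : Matrix n n R} (hA : Aᵀ * A = 1) (hdet : A.det = 1) : A.adjugate = Aᵀ := by
  calc A.adjugate = Aᵀ * A * A.adjugate := by rw [hA, Matrix.one_mul]
    _ = Aᵀ := by rw [Matrix.mul_assoc, mul_adjugate, hdet, one_smul, Matrix.mul_one]

/-- Cayley–Hamilton for `3 × 3` matrices, solved for the adjugate. -/
theorem adjugate_fin_three_eq_mul_self_sub {R : Type*} [CommRing R]
    (A : Matrix (Fin 3) (Fin 3) R) :
    A.adjugate = A * A - A.trace • A + A.adjugate.trace • 1 := by
  ext i j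
  fin_cases i <;> fin_cases j <;>
    simp [adjugate_fin_three, trace_fin_three, mul_apply, Fin.sum_univ_three, one_apply] <;> ring

section Rotation

variable {Φ : Matrix (Fin 3) (Fin 3) ℝ}

theorem mul_self_eq_transpose_add_trace_smul (hO : Φᵀ * Φ = 1) (hdet : Φ.det = 1) :
    Φ * Φ = Φᵀ + Φ.trace • (Φ - 1) := by
  have h := adjugate_fin_three_eq_mul_self_sub Φ
  rw [adjugate_eq_transpose_of_orthogonal hO hdet, trace_transpose] at h
  rw [smul_sub, h]
  abel

theorem sub_transpose_mul_self (hO : Φᵀ * Φ = 1) (hdet : Φ.det = 1) :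
    (Φ - Φᵀ) * (Φ - Φᵀ) = (1 + Φ.trace) • (Φ + Φᵀ - 2 • 1) := by
  have hO' : Φ * Φᵀ = 1 := mul_eq_one_comm.mp hO
  have hsq := mul_self_eq_transpose_add_trace_smul hO hdet
  have hsqT : Φᵀ * Φᵀ = Φ + Φ.trace • (Φᵀ - 1) := by
    rw [← transpose_mul, hsq]
    simp
  simp only [sub_mul, mul_sub, hsq, hsqT, hO, hO']
  module

/-- The vector part is the axial vector of `Φ - Φᵀ`, in the coordinates of `quatRotation`. -/
def rotationQuat (Φ : Matrix (Fin 3) (Fin 3) ℝ) : ℍ[ℝ] :=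
  ⟨1 + Φ.trace, Φ 2 1 - Φ 1 2, Φ 0 1 - Φ 1 0, Φ 0 2 - Φ 2 0⟩

theorem normSq_rotationQuat (hO : Φᵀ * Φ = 1) (hdet : Φ.det = 1) :
    normSq (rotationQuat Φ) = 4 * (1 + Φ.trace) := by
  have h := congrArg trace (sub_transpose_mul_self hO hdet)
  simp [trace_fin_three, mul_apply, Fin.sum_univ_three, ofNat_apply] at h
  rw [normSq_def']
  simp [rotationQuat, trace_fin_three]
  linear_combination (-1 / 2 : ℝ) * h

theorem quatRotation_rotationQuat (hO : Φᵀ * Φ = 1) (hdet : Φ.det = 1) :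
    quatRotation (rotationQuat Φ) = (4 * (1 + Φ.trace)) • Φ := by
  have hK := sub_transpose_mul_self hO hdet
  have hN := normSq_rotationQuat hO hdet
  rw [normSq_def'] at hN
  simp only [rotationQuat, trace_fin_three] at hN
  ext i j
  have hij := congrFun₂ hK i j
  fin_cases i <;> fin_cases j <;>
    simp [quatRotation, rotationQuat, trace_fin_three, mul_apply, Fin.sum_univ_three,
      ofNat_apply] at hij ⊢
  all_goals first | linear_combination 2 * hij | linear_combination hN + 2 * hij

end Rotation

/-- Given Φ ∈ SO(3) with tr Φ ≠ −1, the matrix φ = [[α,β],[−β̄,ᾱ]] with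
α = (1 + tr Φ + i(Φ₃₂ − Φ₂₃))/(2√(1+tr Φ)), β = (Φ₁₂ − Φ₂₁ + i(Φ₁₃ − Φ₃₁))/(2√(1+tr Φ))
belongs to SU(2) and satisfies φ f(x) φ⁻¹ = f(Φx) for all x ∈ ℝ³. -/
theorem statement2 (Φ : Matrix (Fin 3) (Fin 3) ℝ)
    (hO : Φᵀ * Φ = 1) (hdet : Φ.det = 1) (htr : Φ.trace ≠ -1) :
    let α : ℂ := (((1 + Φ.trace : ℝ) : ℂ) + ((Φ 2 1 - Φ 1 2 : ℝ) : ℂ) * Complex.I) /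
      ((2 * Real.sqrt (1 + Φ.trace) : ℝ) : ℂ)
    let β : ℂ := (((Φ 0 1 - Φ 1 0 : ℝ) : ℂ) + ((Φ 0 2 - Φ 2 0 : ℝ) : ℂ) * Complex.I) /
      ((2 * Real.sqrt (1 + Φ.trace) : ℝ) : ℂ)
    let φ : Matrix (Fin 2) (Fin 2) ℂ := !![α, β; -(starRingEnd ℂ) β, (starRingEnd ℂ) α]
    ‖α‖ ^ 2 + ‖β‖ ^ 2 = 1 ∧
      ∀ x : Fin 3 → ℝ, φ * fmap x * φ⁻¹ = fmap (Φ.mulVec x) := by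
  intro α β φ
  have hnorm := normSq_rotationQuat hO hdet
  have hc : 0 < 1 + Φ.trace := by
    have hc₀ : 0 ≤ 4 * (1 + Φ.trace) := hnorm ▸ normSq_nonneg
    have hc₁ : 1 + Φ.trace ≠ 0 := fun h => htr (by linarith)
    exact lt_of_le_of_ne (by linarith) hc₁.symm
  set r := (2 * √(1 + Φ.trace))⁻¹
  have hr : r ^ 2 * (4 * (1 + Φ.trace)) = 1 := by
    rw [inv_pow, mul_pow, Real.sq_sqrt hc.le]
    field_simp
    ring
  have hq : normSq (r • rotationQuat Φ) = 1 := by rw [normSq_smul, hnorm, hr]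
  have hφ : φ = quatMatrix (r • rotationQuat Φ) := by
    ext i j
    fin_cases i <;> fin_cases j <;>
      simp [φ, α, β, quatMatrix, re_smul, r, div_eq_mul_inv, map_ofNat] <;>
      simp [rotationQuat] <;> ring
  refine ⟨?_, fun x => ?_⟩
  · change ‖φ 0 0‖ ^ 2 + ‖φ 0 1‖ ^ 2 = 1
    rw [hφ, normSq_quatMatrix, hq]
  · rw [hφ, inv_quatMatrix hq, quatMatrix_mul_fmap_mul_quatMatrix_star, quatRotation_smul,
      quatRotation_rotationQuat hO hdet, smul_smul, hr, one_smul]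
end
end
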